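/- Let α, β ∈ [0,1] and let k, n be positive integers with k ≤ n−1. Let 𝒳 be a class of probability distributions on {0,1}^{n+1}, and let 𝒴 be the class of distributions on {0,1}^n of the form addr_{n,1}(X) for X ∈ 𝒳. Suppose Iso: {0,1}^n → {0,1} is an (α, β, k)-isolator for 𝒴. Then every X ∈ 𝒳 satisfies TV(X, (U^n, Iso(U^n))) ≥ 2α − α² − 2^{−(n−k−2)} − β, where (U^n, Iso(U^n)) denotes the distribution on {0,1}^{n+1} obtained by sampling u uniformly from {0,1}^n and outputting (u, Iso(u)). -/

import Mathlib

/-!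
`addr_{n,1}` is a Markov kernel, so it can only shrink total variation distance, and it suffices
to compare `Y = addr(X)` with `Z = addr(Uⁿ, Iso(Uⁿ))`. If `σ = Pr[Iso(Uⁿ) = 1] ≥ α`, then `Z` puts
mass `(2 - σ) / 2ⁿ` on every point of `Iso⁻¹(1)`. At most `2ᵏ` points are heavy for `Y`, so at
least `σ 2ⁿ - 2ᵏ` points of `Iso⁻¹(1)` are light for `Y`, and on these `Y` has total mass at most
`β`. This event separates `Y` from `Z` by at least `(σ 2ⁿ - 2ᵏ)(2 - σ) / 2ⁿ - β`, which is at
least `2α - α² - 2^(k+1-n) - β` because `2σ - σ²` is increasing on `[0, 1]`.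
-/

open Finset

/-- The uniform distribution on a finite type. -/
noncomputable def unif (α : Type*) [Fintype α] : α → ℝ := fun _ => (Fintype.card α : ℝ)⁻¹

/-- `p` is a probability distribution on the finite type `α`. -/
def IsDist {α : Type*} [Fintype α] (p : α → ℝ) : Prop :=
  (∀ a, 0 ≤ p a) ∧ ∑ a, p a = 1

open scoped Classical in
/-- Probability that a sample from `p` lands in the event `E`. -/
noncomputable def prob {α : Type*} [Fintype α] (p : α → ℝ) (E : Set α) : ℝ :=
  ∑ a, if a ∈ E then p a else 0

/-- Total variation distance between two distributions on a finite type. -/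
noncomputable def tv {α : Type*} [Fintype α] (p q : α → ℝ) : ℝ :=
  (∑ a, |p a - q a|) / 2

open scoped Classical in
/-- Pushforward of the distribution `p` under the map `f`. -/
noncomputable def push {α β : Type*} [Fintype α] (f : α → β) (p : α → ℝ) : β → ℝ :=
  fun b => ∑ a, if f a = b then p a else 0

/-- `H∞(p) ≥ k`, i.e. every point has mass at most `2 ^ (-k)`. -/
def MinEntropyGE {α : Type*} (p : α → ℝ) (k : ℝ) : Prop :=
  ∀ a, p a ≤ (2 : ℝ) ^ (-k)

/-- `(a, b, k)`-isolator for the class `𝒳` of distributions on the finite type `α`: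
`Iso` outputs `1` with probability at least `a` on the uniform distribution, and for every
`X ∈ 𝒳`, the probability that a sample of `X` is a light point (mass at most `2^(-k)`)
on which `Iso` outputs `1` is at most `b`. -/
def IsIsolator {α : Type*} [Fintype α] (𝒳 : Set (α → ℝ)) (Iso : α → Bool)
    (a b k : ℝ) : Prop :=
  a ≤ prob (unif α) {x | Iso x = true} ∧
  ∀ X ∈ 𝒳, prob X {x | X x ≤ (2 : ℝ) ^ (-k) ∧ Iso x = true} ≤ b

/-- `(ε, k)`-extractor (outputting `m` bits) for the class `𝒳`. -/
def IsExtractor {α : Type*} [Fintype α] {m : ℕ} (𝒳 : Set (α → ℝ))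
    (Ext : α → Fin m → Bool) (ε k : ℝ) : Prop :=
  ∀ X ∈ 𝒳, MinEntropyGE X k → tv (push Ext X) (unif (Fin m → Bool)) ≤ ε

/-- Output distribution of `addr_{n,1}` applied to a sample of `X` on `{0,1}^{n+1}`:
output the first `n` bits if the last bit is `1`, else a fresh uniform sample. -/
noncomputable def addr1Dist (n : ℕ) (X : ((Fin n → Bool) × Bool) → ℝ) :
    (Fin n → Bool) → ℝ :=
  fun y => ∑ w : (Fin n → Bool) × Bool, X w *
    (if w.2 = true then (if w.1 = y then (1 : ℝ) else 0) else ((2 : ℝ) ^ n)⁻¹)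

section Finite

variable {α : Type*} [Fintype α]

theorem prob_eq_sum_filter (p : α → ℝ) (E : Set α) [DecidablePred (· ∈ E)] :
    prob p E = ∑ x with x ∈ E, p x := by
  rw [prob, Finset.sum_filter]
  congr!

theorem prob_unif (E : Set α) [DecidablePred (· ∈ E)] :
    prob (unif α) E = #{x | x ∈ E} / Fintype.card α := by
  simp only [prob_eq_sum_filter, unif, Finset.sum_const, nsmul_eq_mul, div_eq_mul_inv]

theorem IsDist.prob_nonneg {p : α → ℝ} (hp : IsDist p) (E : Set α) : 0 ≤ prob p E :=
  Finset.sum_nonneg fun x _ => by split_ifs <;> simp [hp.1 x]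

theorem IsDist.prob_le_one {p : α → ℝ} (hp : IsDist p) (E : Set α) : prob p E ≤ 1 := by
  rw [← hp.2, prob]
  exact Finset.sum_le_sum fun x _ => by split_ifs <;> simp [hp.1 x]

theorem prob_compl {p : α → ℝ} (hp : ∑ x, p x = 1) (E : Set α) :
    prob p Eᶜ = 1 - prob p E := by
  classical
  rw [← hp, prob, prob, eq_sub_iff_add_eq, ← Finset.sum_add_distrib]
  refine Finset.sum_congr rfl fun x _ => ?_
  by_cases hx : x ∈ E <;> simp [hx]

theorem sum_push {β : Type*} [Fintype β] (f : α → β) (p : α → ℝ) :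
    ∑ y, push f p y = ∑ x, p x := by
  classical
  simp only [push]
  rw [Finset.sum_comm]
  simp

theorem isDist_unif [Nonempty α] : IsDist (unif α) :=
  ⟨fun _ => inv_nonneg.2 (Nat.cast_nonneg _), by simp [unif]⟩

theorem sub_le_tv {p q : α → ℝ} (hpq : ∑ x, p x = ∑ x, q x) (E : Finset α) :
    ∑ x ∈ E, q x - ∑ x ∈ E, p x ≤ tv p q := by
  classical
  have hE : ∑ x ∈ E, (q x - p x) ≤ ∑ x ∈ E, |p x - q x| :=
    Finset.sum_le_sum fun x _ => abs_sub_comm (p x) (q x) ▸ le_abs_self _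
  have hEc : ∑ x ∈ Eᶜ, (p x - q x) ≤ ∑ x ∈ Eᶜ, |p x - q x| :=
    Finset.sum_le_sum fun x _ => le_abs_self _
  have hbalance : ∑ x ∈ E, (q x - p x) = ∑ x ∈ Eᶜ, (p x - q x) := by
    have := Finset.sum_add_sum_compl E (fun x => p x - q x)
    simp only [Finset.sum_sub_distrib] at this ⊢
    linarith
  have hsplit := Finset.sum_add_sum_compl E (fun x => |p x - q x|)
  rw [Finset.sum_sub_distrib] at hE hbalance
  rw [tv]
  linarith

theorem IsDist.card_lt_apply_le_inv {p : α → ℝ} (hp : IsDist p) {c : ℝ} (hc : 0 < c) :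
    (#{x | c < p x} : ℝ) ≤ c⁻¹ := by
  rw [← mul_le_mul_iff_of_pos_right hc, inv_mul_cancel₀ hc.ne', ← hp.2, ← nsmul_eq_mul]
  calc #{x | c < p x} • c ≤ ∑ x with c < p x, p x :=
        Finset.card_nsmul_le_sum _ _ _ fun x hx => (Finset.mem_filter.1 hx).2.le
    _ ≤ ∑ x, p x := Finset.sum_le_univ_sum_of_nonneg hp.1

theorem IsDist.card_le_card_filter_le_add_inv {p : α → ℝ} (hp : IsDist p) {c : ℝ} (hc : 0 < c)
    (P : α → Prop) [DecidablePred P] :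
    (#{x | P x} : ℝ) ≤ #{x | p x ≤ c ∧ P x} + c⁻¹ := by
  classical
  have hsplit : #{x | P x} ≤ #{x | p x ≤ c ∧ P x} + #{x | c < p x} := by
    refine (Finset.card_le_card fun x hx => ?_).trans (Finset.card_union_le _ _)
    by_cases hx' : p x ≤ c <;> simp_all
  have hsplit' : (#{x | P x} : ℝ) ≤ #{x | p x ≤ c ∧ P x} + #{x | c < p x} := by
    exact_mod_cast hsplit
  linarith [hp.card_lt_apply_le_inv hc]

theorem IsDist.prob_unif_mul_card_sub_inv_le [Nonempty α] {p : α → ℝ} (hp : IsDist p) {c : ℝ}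
    (hc : 0 < c) (P : α → Prop) [DecidablePred P] :
    prob (unif α) {x | P x} * Fintype.card α - c⁻¹ ≤ #{x | p x ≤ c ∧ P x} := by
  rw [prob_unif, div_mul_cancel₀ _ (by positivity)]
  simp only [Set.mem_ofPred_eq]
  linarith [hp.card_le_card_filter_le_add_inv hc P]

theorem IsIsolator.sum_light_le {𝒳 : Set (α → ℝ)} {Iso : α → Bool} {a b k : ℝ}
    (hIso : IsIsolator 𝒳 Iso a b k) {Y : α → ℝ} (hY : Y ∈ 𝒳) :
    ∑ x with Y x ≤ (2 : ℝ) ^ (-k) ∧ Iso x = true, Y x ≤ b := by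
  convert hIso.2 Y hY using 1
  rw [prob_eq_sum_filter]
  rfl

end Finite

section Kernel

variable {α β : Type*} [Fintype α] [Fintype β]

def IsStochastic (K : α → β → ℝ) : Prop :=
  (∀ x y, 0 ≤ K x y) ∧ ∀ x, ∑ y, K x y = 1

noncomputable def kernelApply (K : α → β → ℝ) (p : α → ℝ) : β → ℝ :=
  fun y => ∑ x, p x * K x y

variable {K : α → β → ℝ}

theorem IsStochastic.sum_kernelApply (hK : IsStochastic K) (p : α → ℝ) :
    ∑ y, kernelApply K p y = ∑ x, p x := by
  simp only [kernelApply]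
  rw [Finset.sum_comm]
  simp only [← Finset.mul_sum, hK.2, mul_one]

theorem IsStochastic.isDist_kernelApply (hK : IsStochastic K) {p : α → ℝ} (hp : IsDist p) :
    IsDist (kernelApply K p) :=
  ⟨fun y => Finset.sum_nonneg fun x _ => mul_nonneg (hp.1 x) (hK.1 x y),
    (hK.sum_kernelApply p).trans hp.2⟩

theorem IsStochastic.tv_kernelApply_le (hK : IsStochastic K) (p q : α → ℝ) :
    tv (kernelApply K p) (kernelApply K q) ≤ tv p q := by
  have hpoint : ∀ y, |kernelApply K p y - kernelApply K q y| ≤ ∑ x, |p x - q x| * K x y := by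
    intro y
    simp only [kernelApply, ← Finset.sum_sub_distrib, ← sub_mul]
    refine (Finset.abs_sum_le_sum_abs _ _).trans_eq (Finset.sum_congr rfl fun x _ => ?_)
    rw [abs_mul, abs_of_nonneg (hK.1 x y)]
  have hsum : ∑ y, ∑ x, |p x - q x| * K x y = ∑ x, |p x - q x| := by
    rw [Finset.sum_comm]
    simp only [← Finset.mul_sum, hK.2, mul_one]
  rw [tv, tv]
  gcongr
  exact (Finset.sum_le_sum fun y _ => hpoint y).trans_eq hsum

end Kernel

theorem push_graph_apply {α β : Type*} [Fintype α] [DecidableEq β] (f : α → β) (p : α → ℝ)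
    (u : α) (b : β) : push (fun u => (u, f u)) p (u, b) = if f u = b then p u else 0 := by
  classical
  simp only [push, Prod.mk.injEq]
  rw [Finset.sum_eq_single u] <;> aesop

theorem sum_push_graph_apply {α β : Type*} [Fintype α] [DecidableEq β] (f : α → β)
    (p : α → ℝ) (b : β) : ∑ u, push (fun u => (u, f u)) p (u, b) = prob p {u | f u = b} := by
  simp only [push_graph_apply, prob, Set.mem_ofPred_eq]
  congr!

section Addressing

variable (n : ℕ)

noncomputable def addrKernel (w : (Fin n → Bool) × Bool) (y : Fin n → Bool) : ℝ :=
  if w.2 = true then (if w.1 = y then 1 else 0) else ((2 : ℝ) ^ n)⁻¹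

theorem isStochastic_addrKernel : IsStochastic (addrKernel n) := by
  refine ⟨fun w y => by unfold addrKernel; split_ifs <;> positivity, fun w => ?_⟩
  unfold addrKernel
  split_ifs <;> simp

theorem sum_addr1Dist (X : ((Fin n → Bool) × Bool) → ℝ) :
    ∑ y, addr1Dist n X y = ∑ w, X w :=
  (isStochastic_addrKernel n).sum_kernelApply X

theorem IsDist.addr1Dist {X : ((Fin n → Bool) × Bool) → ℝ} (hX : IsDist X) :
    IsDist (addr1Dist n X) :=
  (isStochastic_addrKernel n).isDist_kernelApply hX

theorem tv_addr1Dist_le (X X' : ((Fin n → Bool) × Bool) → ℝ) :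
    tv (addr1Dist n X) (addr1Dist n X') ≤ tv X X' :=
  (isStochastic_addrKernel n).tv_kernelApply_le X X'

theorem addr1Dist_apply (X : ((Fin n → Bool) × Bool) → ℝ) (y : Fin n → Bool) :
    addr1Dist n X y = X (y, true) + (∑ u, X (u, false)) / 2 ^ n := by
  simp [addr1Dist, Fintype.sum_prod_type, Finset.sum_add_distrib, Finset.sum_mul, div_eq_mul_inv]

theorem addr1Dist_graph_unif_apply {f : (Fin n → Bool) → Bool} {y : Fin n → Bool}
    (hy : f y = true) :
    addr1Dist n (push (fun u => (u, f u)) (unif (Fin n → Bool))) y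
      = (2 - prob (unif (Fin n → Bool)) {u | f u = true}) / 2 ^ n := by
  rw [addr1Dist_apply, push_graph_apply, if_pos hy, sum_push_graph_apply,
    show {u | f u = false} = {u | f u = true}ᶜ by ext; simp, prob_compl isDist_unif.2, unif]
  simp only [Fintype.card_fun, Fintype.card_bool, Fintype.card_fin, Nat.cast_pow, Nat.cast_ofNat]
  ring

end Addressing

theorem two_mul_sub_sq_sub_le {a σ κ N m : ℝ} (hN : 0 < N) (hσ0 : 0 ≤ σ) (hσ1 : σ ≤ 1)
    (haσ : a ≤ σ) (hκ : 0 ≤ κ) (hm : σ * N - κ ≤ m) :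
    2 * a - a ^ 2 - 2 * κ / N ≤ m * ((2 - σ) / N) := by
  have hconcave : 2 * a - a ^ 2 ≤ 2 * σ - σ ^ 2 := by nlinarith
  have hmass : (σ * N - κ) * (2 - σ) ≤ m * (2 - σ) :=
    mul_le_mul_of_nonneg_right hm (by linarith)
  rw [← mul_div_assoc, le_div_iff₀ hN, sub_mul, div_mul_cancel₀ _ hN.ne']
  nlinarith

theorem two_rpow_neg_sub_sub_two (n k : ℕ) :
    (2 : ℝ) ^ (-((n : ℝ) - k - 2)) = 4 * ((2 : ℝ) ^ (-(k : ℝ)))⁻¹ / 2 ^ n := by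
  rw [show -((n : ℝ) - k - 2) = (k + 2 : ℕ) - (n : ℝ) by push_cast; ring,
    Real.rpow_sub two_pos, Real.rpow_neg zero_le_two, inv_inv]
  simp only [Real.rpow_natCast, pow_add]
  ring

theorem stmt1_general (a b : ℝ)
    (k n : ℕ)
    (𝒳 : Set (((Fin n → Bool) × Bool) → ℝ))
    (h𝒳 : ∀ X ∈ 𝒳, IsDist X)
    (Iso : (Fin n → Bool) → Bool)
    (hIso : IsIsolator {Y | ∃ X ∈ 𝒳, Y = addr1Dist n X} Iso a b k)
    (X : ((Fin n → Bool) × Bool) → ℝ) (hX : X ∈ 𝒳) :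
    2 * a - a ^ 2 - (2 : ℝ) ^ (-((n : ℝ) - (k : ℝ) - 2)) - b
      ≤ tv X (push (fun u => (u, Iso u)) (unif (Fin n → Bool))) := by
  have hXd := h𝒳 X hX
  set c : ℝ := (2 : ℝ) ^ (-(k : ℝ))
  set Q := push (fun u => (u, Iso u)) (unif (Fin n → Bool))
  set σ := prob (unif (Fin n → Bool)) {u | Iso u = true}
  set E : Finset (Fin n → Bool) := {y | addr1Dist n X y ≤ c ∧ Iso y = true}
  have hYE : ∑ y ∈ E, addr1Dist n X y ≤ b := hIso.sum_light_le ⟨X, hX, rfl⟩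
  have hcardE : σ * 2 ^ n - c⁻¹ ≤ #E := by
    simpa using hXd.addr1Dist.prob_unif_mul_card_sub_inv_le (by positivity : 0 < c) (Iso · = true)
  calc 2 * a - a ^ 2 - (2 : ℝ) ^ (-((n : ℝ) - (k : ℝ) - 2)) - b
      ≤ 2 * a - a ^ 2 - 2 * c⁻¹ / 2 ^ n - b := by
        rw [two_rpow_neg_sub_sub_two]
        gcongr
        norm_num
    _ ≤ #E * ((2 - σ) / 2 ^ n) - b := by
        gcongr
        exact two_mul_sub_sq_sub_le (by positivity) (isDist_unif.prob_nonneg _) (isDist_unif.prob_le_one _)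
          hIso.1 (by positivity) hcardE
    _ ≤ ∑ y ∈ E, addr1Dist n Q y - ∑ y ∈ E, addr1Dist n X y := by
        rw [Finset.sum_congr rfl fun y hy =>
          addr1Dist_graph_unif_apply n (Finset.mem_filter.1 hy).2.2, Finset.sum_const, nsmul_eq_mul]
        linarith
    _ ≤ tv (addr1Dist n X) (addr1Dist n Q) := by
        apply sub_le_tv
        rw [sum_addr1Dist, sum_addr1Dist, sum_push, hXd.2, isDist_unif.2]
    _ ≤ tv X Q := tv_addr1Dist_le n X Q

theorem stmt1 (a b : ℝ) (ha : a ∈ Set.Icc (0 : ℝ) 1) (hb : b ∈ Set.Icc (0 : ℝ) 1)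
    (k n : ℕ) (hk : 0 < k) (hn : 0 < n) (hkn : k + 1 ≤ n)
    (𝒳 : Set (((Fin n → Bool) × Bool) → ℝ))
    (h𝒳 : ∀ X ∈ 𝒳, IsDist X)
    (Iso : (Fin n → Bool) → Bool)
    (hIso : IsIsolator {Y | ∃ X ∈ 𝒳, Y = addr1Dist n X} Iso a b k)
    (X : ((Fin n → Bool) × Bool) → ℝ) (hX : X ∈ 𝒳) :
    2 * a - a ^ 2 - (2 : ℝ) ^ (-((n : ℝ) - (k : ℝ) - 2)) - b
      ≤ tv X (push (fun u => (u, Iso u)) (unif (Fin n → Bool))) :=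
  stmt1_general a b k n 𝒳 h𝒳 Iso hIso X hX
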